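/- arXiv:2602.08138 — 4 statements merged into one kernel-verified Lean document; each statement's English description precedes it below -/
import Mathlib

section
/- If F ⊆ P(ω) is a filter and δ ⊆ ω^{<ω} is an F-fence, then the δ-Fubini power F^{⊗[δ]} is again a filter. Specifically, if T_A and T_B are trees F-branching up to δ, then T_A ∩ T_B is also F-branching up to δ. -/
/-- A filter on ω: a nonempty upper set closed under binary intersections, without ∅. -/
def IsFilterFam (F : Set (Set ℕ)) : Prop :=
  F.Nonempty ∧ (∀ A B : Set ℕ, A ∈ F → A ⊆ B → B ∈ F) ∧
    (∀ A B : Set ℕ, A ∈ F → B ∈ F → A ∩ B ∈ F) ∧ ∅ ∉ F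

/-- A tree: contains the empty string and is closed under prefixes. -/
def IsTree (T : Set (List ℕ)) : Prop :=
  [] ∈ T ∧ ∀ σ τ : List ℕ, σ <+: τ → τ ∈ T → σ ∈ T

/-- The length-`n` initial segment of an infinite string `p`. -/
def seg (p : ℕ → ℕ) (n : ℕ) : List ℕ := List.ofFn fun i : Fin n => p i

/-- `T` is `F`-branching up to `δ`: `T` is a (nonempty) tree, every infinite path
through `T` has a prefix in `δ`, and every node of `T` either lies in `δ` or has
`F`-large successor set. -/
def BranchingUpTo (F : Set (Set ℕ)) (δ : Set (List ℕ)) (T : Set (List ℕ)) : Prop :=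
  IsTree T ∧
    (∀ p : ℕ → ℕ, (∀ n, seg p n ∈ T) → ∃ n, seg p n ∈ δ) ∧
    (∀ σ ∈ T, σ ∈ δ ∨ {n | σ ++ [n] ∈ T} ∈ F)

/-- An `F`-fence: an antichain `δ` (w.r.t. the prefix order) such that some tree is
`F`-branching up to `δ`. -/
def IsFence (F : Set (Set ℕ)) (δ : Set (List ℕ)) : Prop :=
  (∀ σ ∈ δ, ∀ τ ∈ δ, σ ≠ τ → ¬ σ <+: τ) ∧ ∃ T, BranchingUpTo F δ T

/-- A fixed coding of finite strings by natural numbers. -/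
def code : List ℕ → ℕ := Encodable.encode

/-- The `δ`-Fubini power: upward closure in `𝒫(ω)` of the coded sets `⌜T ∩ δ⌝`
over trees `T` that are `F`-branching up to `δ`. -/
def deltaFubini (F : Set (Set ℕ)) (δ : Set (List ℕ)) : Set (Set ℕ) :=
  {X | ∃ T : Set (List ℕ), BranchingUpTo F δ T ∧ code '' (T ∩ δ) ⊆ X}

/-- If `F` is a filter and `δ` an `F`-fence, then the `δ`-Fubini power `F^{⊗[δ]}` is a
filter; specifically, the intersection of two trees `F`-branching up to `δ` is again
`F`-branching up to `δ`. -/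
theorem stmt6 (F : Set (Set ℕ)) (δ : Set (List ℕ)) (hF : IsFilterFam F)
    (hδ : IsFence F δ) :
    IsFilterFam (deltaFubini F δ) ∧
      ∀ T₁ T₂ : Set (List ℕ), BranchingUpTo F δ T₁ → BranchingUpTo F δ T₂ →
        BranchingUpTo F δ (T₁ ∩ T₂) := by
  classical
  obtain ⟨hanti, T₀, hT₀⟩ := hδ
  have hinter : ∀ T₁ T₂ : Set (List ℕ), BranchingUpTo F δ T₁ → BranchingUpTo F δ T₂ →
      BranchingUpTo F δ (T₁ ∩ T₂) := by
    rintro T₁ T₂ ⟨⟨hn₁, hp₁⟩, hpath₁, hb₁⟩ ⟨⟨hn₂, hp₂⟩, hpath₂, hb₂⟩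
    refine ⟨⟨⟨hn₁, hn₂⟩, ?_⟩, ?_, ?_⟩
    · rintro σ τ hpre ⟨h1, h2⟩
      exact ⟨hp₁ σ τ hpre h1, hp₂ σ τ hpre h2⟩
    · intro p hp
      exact hpath₁ p fun n => (hp n).1
    · rintro σ ⟨h1, h2⟩
      rcases hb₁ σ h1 with h | h1'
      · exact Or.inl h
      rcases hb₂ σ h2 with h | h2'
      · exact Or.inl h
      · right
        have hi := hF.2.2.1 _ _ h1' h2'
        exact hF.2.1 _ _ hi (fun n hn => hn)
  have hne : ∀ T, BranchingUpTo F δ T → (T ∩ δ).Nonempty := by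
    intro T hT
    obtain ⟨⟨hnil, hpref⟩, hpath, hb⟩ := hT
    by_contra h
    rw [Set.not_nonempty_iff_eq_empty] at h
    have hTd : ∀ σ ∈ T, σ ∉ δ := by
      intro σ hσ hδσ
      have : σ ∈ T ∩ δ := ⟨hσ, hδσ⟩
      rw [h] at this
      exact this
    have hsucc : ∀ σ ∈ T, ∃ n, σ ++ [n] ∈ T := by
      intro σ hσ
      rcases hb σ hσ with hd | hf
      · exact absurd hd (hTd σ hσ)
      · by_contra hno
        push_neg at hno
        have : {n | σ ++ [n] ∈ T} = (∅ : Set ℕ) := by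
          ext n; simp [hno n]
        rw [this] at hf
        exact hF.2.2.2 hf
    set f : List ℕ → ℕ := fun σ =>
      if h : ∃ n, σ ++ [n] ∈ T then h.choose else 0 with hf
    set g : ℕ → List ℕ := fun n => Nat.rec [] (fun _ σ => σ ++ [f σ]) n with hg
    have hgstep : ∀ n, g (n + 1) = g n ++ [f (g n)] := fun n => rfl
    have hgT : ∀ n, g n ∈ T := by
      intro n
      induction n with
      | zero => exact hnil
      | succ n ih =>
        rw [hgstep]
        have hx := hsucc (g n) ih
        have : f (g n) = hx.choose := by simp [hf, hx]
        rw [this]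
        exact hx.choose_spec
    set p : ℕ → ℕ := fun n => f (g n) with hp
    have hseg : ∀ n, seg p n = g n := by
      intro n
      induction n with
      | zero => rfl
      | succ n ih =>
        have : seg p (n + 1) = seg p n ++ [p n] := by
          simp only [seg, List.ofFn_succ', List.concat_eq_append,
            Fin.coe_castSucc, Fin.val_last]
        rw [this, ih, hgstep]
    have := hpath p (fun n => by rw [hseg]; exact hgT n)
    obtain ⟨n, hn⟩ := this
    rw [hseg] at hn
    exact hTd (g n) (hgT n) hn
  refine ⟨⟨⟨Set.univ, T₀, hT₀, fun x _ => trivial⟩, ?_, ?_, ?_⟩, hinter⟩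
  · rintro A B ⟨T, hT, hsub⟩ hAB
    exact ⟨T, hT, hsub.trans hAB⟩
  · rintro A B ⟨Ta, hTa, ha⟩ ⟨Tb, hTb, hb⟩
    refine ⟨Ta ∩ Tb, hinter _ _ hTa hTb, ?_⟩
    rintro x ⟨σ, ⟨⟨h1, h2⟩, hd⟩, rfl⟩
    exact ⟨ha ⟨σ, ⟨h1, hd⟩, rfl⟩, hb ⟨σ, ⟨h2, hd⟩, rfl⟩⟩
  · rintro ⟨T, hT, hsub⟩
    obtain ⟨σ, hσ⟩ := hne T hT
    exact hsub ⟨σ, hσ, rfl⟩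
end

section
/- Let I ⊆ P(ω) be an ideal with Fin ⊆ I, and let I* be its dual filter. Viewing (ω^ω, ≤) as a directed set under the pointwise order, ω^ω is Tukey reducible to I ⊗ I: there exists a cofinal (Tukey) map from (I* ⊗ I*, ⊇) to (ω^ω, ≤). -/
/-- An ideal on ω: downward closed, closed under binary unions, with ∅ ∈ I and ω ∉ I. -/
def IsIdeal (I : Set (Set ℕ)) : Prop :=
  (∀ A B : Set ℕ, A ∈ I → B ⊆ A → B ∈ I) ∧
    (∀ A B : Set ℕ, A ∈ I → B ∈ I → A ∪ B ∈ I) ∧ ∅ ∈ I ∧ Set.univ ∉ I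

/-- The dual family (dual filter of an ideal): complements of members. -/
def dualFam {X : Type*} (F : Set (Set X)) : Set (Set X) := {A | Aᶜ ∈ F}

/-- Fubini product of filters (upper sets), as a family on ω × ω:
`A ∈ F ⊗ G` iff `{m : A_(m) ∈ G} ∈ F`. -/
def fubiniUpper (U V : Set (Set ℕ)) : Set (Set (ℕ × ℕ)) :=
  {A | {m | {l | (m, l) ∈ A} ∈ V} ∈ U}

/-- If `I` is an ideal with `Fin ⊆ I`, then `ω^ω ≤_Tuk I ⊗ I`: there is a map
`ψ : (I* ⊗ I*, ⊇) → (ω^ω, ≤)` carrying cofinal sets to cofinal sets. -/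
theorem stmt9 (I : Set (Set ℕ)) (hI : IsIdeal I)
    (hFin : ∀ A : Set ℕ, A.Finite → A ∈ I) :
    ∃ ψ : Set (ℕ × ℕ) → (ℕ → ℕ),
      ∀ S : Set (Set (ℕ × ℕ)), S ⊆ fubiniUpper (dualFam I) (dualFam I) →
        (∀ A ∈ fubiniUpper (dualFam I) (dualFam I), ∃ B ∈ S, B ⊆ A) →
        ∀ f : ℕ → ℕ, ∃ B ∈ S, ∀ n, f n ≤ ψ B n := by
  obtain ⟨hdown, hunion, hempty, huniv⟩ := hI
  refine ⟨fun B n => sInf {l | ∃ m, n ≤ m ∧ (m, l) ∈ B}, ?_⟩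
  intro S hS hcof f
  -- the set A_f
  set A : Set (ℕ × ℕ) := {p | ∀ k ≤ p.1, f k ≤ p.2} with hA
  have hAmem : A ∈ fubiniUpper (dualFam I) (dualFam I) := by
    have h0 : {m | {l | (m, l) ∈ A}ᶜ ∈ I} = Set.univ := by
      ext m
      simp only [Set.mem_setOf_eq, Set.mem_univ, iff_true]
      apply hFin
      apply Set.Finite.subset (Set.finite_Iio ((Finset.range (m+1)).sup f + 1))
      intro l hl
      simp only [Set.mem_compl_iff, Set.mem_setOf_eq, hA] at hl
      push_neg at hl
      obtain ⟨k, hk, hlk⟩ := hl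
      have : f k ≤ (Finset.range (m+1)).sup f :=
        Finset.le_sup (Finset.mem_range.mpr (Nat.lt_succ_of_le hk))
      simp only [Set.mem_Iio]
      omega
    simp only [fubiniUpper, Set.mem_setOf_eq, dualFam, h0, Set.compl_univ]
    exact hempty
  obtain ⟨B, hBS, hBA⟩ := hcof A hAmem
  refine ⟨B, hBS, fun n => ?_⟩
  -- nonemptiness of the set
  have hBfub := hS hBS
  simp only [fubiniUpper, Set.mem_setOf_eq, dualFam] at hBfub
  have hne : {l | ∃ m, n ≤ m ∧ (m, l) ∈ B}.Nonempty := by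
    -- find m ≥ n with section in dual filter
    by_cases hM : ∃ m, n ≤ m ∧ m ∈ {m | {l | (m, l) ∈ B}ᶜ ∈ I}
    · obtain ⟨m, hnm, hm⟩ := hM
      have : {l | (m, l) ∈ B}.Nonempty := by
        by_contra h
        rw [Set.not_nonempty_iff_eq_empty] at h
        simp only [Set.mem_setOf_eq] at hm
        rw [h, Set.compl_empty] at hm
        exact huniv hm
      obtain ⟨l, hl⟩ := this
      exact ⟨l, m, hnm, hl⟩
    · exfalso
      push_neg at hM
      have hsub : {m | {l | (m, l) ∈ B}ᶜ ∈ I} ⊆ Set.Iio n := by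
        intro m hm
        by_contra h
        simp only [Set.mem_Iio, not_lt] at h
        exact hM m h hm
      have h1 : {m | {l | (m, l) ∈ B}ᶜ ∈ I} ∈ I :=
        hFin _ (Set.Finite.subset (Set.finite_Iio n) hsub)
      have := hunion _ _ h1 hBfub
      rw [Set.union_compl_self] at this
      exact huniv this
  have hmem := Nat.sInf_mem hne
  obtain ⟨m, hnm, hmB⟩ := hmem
  have := hBA hmB
  exact this n hnm
end

section
/- If U is an ultrafilter on ω, V is a filter on ω, and Φ : ⊆ ω^ω → ω is a partial continuous function witnessing U ≤°_LT V, then for every A ⊆ ω: A ∈ U if and only if there exists a V-branching tree T with [T] ⊆ dom(Φ) and Φ[[T]] ⊆ A. In particular, no two distinct ultrafilters can share the same witnessing pair (V, Φ). Key step: if T and T' are both V-branching trees with V a filter, then [T] ∩ [T'] ≠ ∅. -/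
/-- An ultrafilter on ω. -/
def IsUltraFam (F : Set (Set ℕ)) : Prop :=
  IsFilterFam F ∧ ∀ A : Set ℕ, A ∈ F ∨ Aᶜ ∈ F

/-- A `V`-branching tree: a nonempty tree all of whose nodes have `V`-large
successor sets. -/
def IsBranching (V : Set (Set ℕ)) (T : Set (List ℕ)) : Prop :=
  IsTree T ∧ ∀ σ ∈ T, {n | σ ++ [n] ∈ T} ∈ V

/-- `φ` (the finite representative, with antichain domain, of a partial continuous
function `Φ : ⊆ ω^ω → ω`) witnesses `U ≤°_LT V`: for every `A ∈ U` there is a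
`V`-branching tree `T` with `[T] ⊆ dom Φ` and `Φ[[T]] ⊆ A`. -/
def Witnesses (V : Set (Set ℕ)) (φ : List ℕ → Option ℕ) (U : Set (Set ℕ)) : Prop :=
  ∀ A ∈ U, ∃ T : Set (List ℕ), IsBranching V T ∧
    ∀ p : ℕ → ℕ, (∀ n, seg p n ∈ T) → ∃ n c, φ (seg p n) = some c ∧ c ∈ A

lemma seg_succ (p : ℕ → ℕ) (n : ℕ) : seg p (n + 1) = seg p n ++ [p n] := by
  rw [seg, seg, List.ofFn_succ']
  simp [List.concat_eq_append]

lemma seg_prefix_seg (p : ℕ → ℕ) {n m : ℕ} (h : n ≤ m) : seg p n <+: seg p m := by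
  induction m, h using Nat.le_induction with
  | base => exact List.prefix_rfl
  | succ m _ ih => exact ih.trans (seg_succ p m ▸ List.prefix_append _ _)

lemma IsFilterFam.nonempty_of_mem {F : Set (Set ℕ)} (hF : IsFilterFam F) {A : Set ℕ}
    (hA : A ∈ F) : A.Nonempty :=
  Set.nonempty_iff_ne_empty.mpr fun h => hF.2.2.2 (h ▸ hA)

lemma exists_path_of_forall_extend {S : Set (List ℕ)} (hnil : [] ∈ S)
    (hext : ∀ σ ∈ S, ∃ k, σ ++ [k] ∈ S) : ∃ p : ℕ → ℕ, ∀ n, seg p n ∈ S := by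
  have hext' : ∀ σ, ∃ k, σ ∈ S → σ ++ [k] ∈ S := fun σ => by
    by_cases hσ : σ ∈ S
    · obtain ⟨k, hk⟩ := hext σ hσ
      exact ⟨k, fun _ => hk⟩
    · exact ⟨0, fun h => absurd h hσ⟩
  choose next hnext using hext'
  let g : ℕ → List ℕ := fun n => Nat.rec [] (fun _ σ => σ ++ [next σ]) n
  have hg : ∀ n, seg (fun n => next (g n)) n = g n := by
    intro n
    induction n with
    | zero => rfl
    | succ n ih => rw [seg_succ, ih]
  refine ⟨fun n => next (g n), fun n => hg n ▸ ?_⟩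
  induction n with
  | zero => exact hnil
  | succ n ih => exact hnext (g n) ih

lemma IsBranching.exists_common_path {V : Set (Set ℕ)} (hV : IsFilterFam V)
    {T T' : Set (List ℕ)} (hT : IsBranching V T) (hT' : IsBranching V T') :
    ∃ p : ℕ → ℕ, (∀ n, seg p n ∈ T) ∧ (∀ n, seg p n ∈ T') := by
  have hext : ∀ σ ∈ T ∩ T', ∃ k, σ ++ [k] ∈ T ∩ T' := fun σ ⟨hσ, hσ'⟩ =>
    hV.nonempty_of_mem (hV.2.2.1 _ _ (hT.2 σ hσ) (hT'.2 σ hσ'))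
  obtain ⟨p, hp⟩ := exists_path_of_forall_extend (S := T ∩ T') ⟨hT.1.1, hT'.1.1⟩ hext
  exact ⟨p, fun n => (hp n).1, fun n => (hp n).2⟩

lemma eq_of_seg_of_antichain {φ : List ℕ → Option ℕ}
    (hAnti : ∀ σ τ : List ℕ, (φ σ).isSome → (φ τ).isSome → σ <+: τ → σ = τ)
    {p : ℕ → ℕ} {n m c c' : ℕ} (hc : φ (seg p n) = some c) (hc' : φ (seg p m) = some c') :
    c = c' := by
  have hseg : seg p n = seg p m := by
    rcases le_total n m with h | h
    · exact hAnti _ _ (by simp [hc]) (by simp [hc']) (seg_prefix_seg p h)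
    · exact (hAnti _ _ (by simp [hc']) (by simp [hc]) (seg_prefix_seg p h)).symm
  rw [hseg, hc'] at hc
  exact (Option.some.inj hc).symm

lemma not_disjoint_of_branching {V : Set (Set ℕ)} (hV : IsFilterFam V) {φ : List ℕ → Option ℕ}
    (hAnti : ∀ σ τ : List ℕ, (φ σ).isSome → (φ τ).isSome → σ <+: τ → σ = τ)
    {A B : Set ℕ} {T T' : Set (List ℕ)} (hT : IsBranching V T) (hT' : IsBranching V T')
    (hTA : ∀ p : ℕ → ℕ, (∀ n, seg p n ∈ T) → ∃ n c, φ (seg p n) = some c ∧ c ∈ A)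
    (hTB : ∀ p : ℕ → ℕ, (∀ n, seg p n ∈ T') → ∃ n c, φ (seg p n) = some c ∧ c ∈ B) :
    ¬Disjoint A B := by
  obtain ⟨p, hp, hp'⟩ := hT.exists_common_path hV hT'
  obtain ⟨n, c, hc, hcA⟩ := hTA p hp
  obtain ⟨m, c', hc', hcB⟩ := hTB p hp'
  rw [eq_of_seg_of_antichain hAnti hc hc'] at hcA
  exact Set.not_disjoint_iff.mpr ⟨c', hcA, hcB⟩

lemma Witnesses.mem_iff {V W : Set (Set ℕ)} (hV : IsFilterFam V) (hW : IsUltraFam W)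
    {φ : List ℕ → Option ℕ}
    (hAnti : ∀ σ τ : List ℕ, (φ σ).isSome → (φ τ).isSome → σ <+: τ → σ = τ)
    (hw : Witnesses V φ W) (A : Set ℕ) :
    A ∈ W ↔ ∃ T : Set (List ℕ), IsBranching V T ∧
      ∀ p : ℕ → ℕ, (∀ n, seg p n ∈ T) → ∃ n c, φ (seg p n) = some c ∧ c ∈ A := by
  refine ⟨hw A, fun ⟨T, hT, hTA⟩ => (hW.2 A).resolve_right fun hAc => ?_⟩
  obtain ⟨T', hT', hTAc⟩ := hw Aᶜ hAc
  exact not_disjoint_of_branching hV hAnti hT hT' hTA hTAc disjoint_compl_right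

/-- If `U` is an ultrafilter, `V` a filter, and `Φ` (with finite representative `φ`
having antichain domain) witnesses `U ≤°_LT V`, then for every `A ⊆ ω`:
`A ∈ U` iff there is a `V`-branching tree `T` with `[T] ⊆ dom Φ` and `Φ[[T]] ⊆ A`.
In particular no two distinct ultrafilters share the same witnessing pair `(V, Φ)`.
Key step: any two `V`-branching trees share a common infinite path. -/
theorem stmt12 (U V : Set (Set ℕ)) (hU : IsUltraFam U) (hV : IsFilterFam V)
    (φ : List ℕ → Option ℕ)
    (hAnti : ∀ σ τ : List ℕ, (φ σ).isSome → (φ τ).isSome → σ <+: τ → σ = τ)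
    (hwit : Witnesses V φ U) :
    (∀ A : Set ℕ, A ∈ U ↔ ∃ T : Set (List ℕ), IsBranching V T ∧
        ∀ p : ℕ → ℕ, (∀ n, seg p n ∈ T) → ∃ n c, φ (seg p n) = some c ∧ c ∈ A) ∧
    (∀ U' : Set (Set ℕ), IsUltraFam U' → Witnesses V φ U' → U' = U) ∧
    (∀ T T' : Set (List ℕ), IsBranching V T → IsBranching V T' →
        ∃ p : ℕ → ℕ, (∀ n, seg p n ∈ T) ∧ (∀ n, seg p n ∈ T')) :=
  ⟨hwit.mem_iff hV hU hAnti,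
    fun _ hU' hwit' => Set.ext fun A =>
      (hwit'.mem_iff hV hU' hAnti A).trans (hwit.mem_iff hV hU hAnti A).symm,
    fun _ _ hT hT' => hT.exists_common_path hV hT'⟩
end

section
/- The map h : ω → ω sending 2^r + s ↦ ⟨2^r, s⟩ for s < 2^r (where ⟨a, b⟩ denotes the b-th element of the interval I_a of the fixed partition of ω into consecutive intervals with |I_a| = a) witnesses a Katětov reduction ED_fin ≤_K Sum_{1/n}: for every A ∈ ED_fin, the preimage h⁻¹[A] satisfies Σ_{n ∈ h⁻¹[A]} 1/n < ∞. -/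
/-!
On the dyadic block `[2^r, 2^(r+1))` the map `h` is a translation onto `I_{2^r}`, so `h⁻¹[A]` meets
that block in at most `|A ∩ I_{2^r}|` points, each contributing at most `2^(-r)` to the harmonic sum.
For `A ∈ ED_fin` these counts are eventually bounded by some `m`, so the block sums of `h⁻¹[A]` are
dominated by the geometric series `m · 2^(-r)`.
-/

def intStart (a : ℕ) : ℕ := Finset.sum (Finset.range a) id

def interval (a : ℕ) : Set ℕ := Set.Ico (intStart a) (intStart a + a)

def EDfin : Set (Set ℕ) :=
  {A | ∃ m N : ℕ, ∀ n : ℕ, N ≤ n → (A ∩ interval n).ncard ≤ m}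

open Finset

theorem Finset.sum_range_two_pow_eq {M : Type*} [AddCommMonoid M] (f : ℕ → M) (K : ℕ) :
    ∑ n ∈ range (2 ^ K), f n = f 0 + ∑ r ∈ range K, ∑ n ∈ Ico (2 ^ r) (2 ^ (r + 1)), f n := by
  induction K with
  | zero => simp
  | succ K ih =>
    rw [sum_range_succ, ← add_assoc, ← ih,
      sum_range_add_sum_Ico f (Nat.pow_le_pow_right two_pos K.le_succ)]

theorem summable_of_summable_sum_Ico_two_pow {f : ℕ → ℝ} (hf : ∀ n, 0 ≤ f n)
    (h : Summable fun r ↦ ∑ n ∈ Ico (2 ^ r) (2 ^ (r + 1)), f n) : Summable f := by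
  refine summable_of_sum_range_le hf (c := f 0 + ∑' r, ∑ n ∈ Ico (2 ^ r) (2 ^ (r + 1)), f n)
    fun K ↦ ?_
  calc ∑ n ∈ range K, f n
      ≤ ∑ n ∈ range (2 ^ K), f n :=
        sum_le_sum_of_subset_of_nonneg (range_subset_range.mpr K.lt_two_pow_self.le)
          fun n _ _ ↦ hf n
    _ = f 0 + ∑ r ∈ range K, ∑ n ∈ Ico (2 ^ r) (2 ^ (r + 1)), f n := sum_range_two_pow_eq f K
    _ ≤ _ := by
        gcongr
        exact h.sum_le_tsum _ fun r _ ↦ sum_nonneg fun n _ ↦ hf n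

theorem sum_Ico_two_pow_indicator_one_div_le (B : Set ℕ) (r : ℕ) :
    ∑ n ∈ Ico (2 ^ r) (2 ^ (r + 1)), B.indicator (fun n ↦ (1 : ℝ) / n) n
      ≤ (B ∩ Set.Ico (2 ^ r) (2 ^ (r + 1))).ncard * (1 / 2) ^ r := by
  classical
  have hcard : (B ∩ Set.Ico (2 ^ r) (2 ^ (r + 1))).ncard
      = #{n ∈ Ico (2 ^ r) (2 ^ (r + 1)) | n ∈ B} := by
    rw [← Set.ncard_coe_finset, coe_filter]
    congr 1
    ext n
    simp only [Set.mem_inter_iff, Set.mem_ofPred_eq, mem_Ico, Set.mem_Ico, and_comm]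
  have hterm : ∀ n : ℕ, n ∈ Ico (2 ^ r) (2 ^ (r + 1)) → (1 : ℝ) / n ≤ (1 / 2) ^ r := by
    intro n hn
    rw [div_pow, one_pow]
    exact one_div_le_one_div_of_le (by positivity) (by exact_mod_cast (mem_Ico.mp hn).1)
  rw [sum_indicator_eq_sum_filter, hcard, ← nsmul_eq_mul]
  exact sum_le_card_nsmul _ _ _ fun n hn ↦ hterm n (mem_filter.mp hn).1

theorem summable_indicator_one_div_of_ncard_inter_Ico_two_pow_le {B : Set ℕ} {m N : ℕ}
    (hB : ∀ r, N ≤ r → (B ∩ Set.Ico (2 ^ r) (2 ^ (r + 1))).ncard ≤ m) :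
    Summable (B.indicator fun n ↦ (1 : ℝ) / n) := by
  have hnonneg : ∀ n, 0 ≤ B.indicator (fun n ↦ (1 : ℝ) / n) n :=
    fun n ↦ Set.indicator_nonneg (fun _ _ ↦ by positivity) n
  refine summable_of_summable_sum_Ico_two_pow hnonneg ((summable_nat_add_iff N).mp ?_)
  refine .of_nonneg_of_le (fun r ↦ sum_nonneg fun n _ ↦ hnonneg n) (fun r ↦ ?_)
    (((summable_nat_add_iff N).mpr summable_geometric_two).mul_left (m : ℝ))
  refine (sum_Ico_two_pow_indicator_one_div_le B (r + N)).trans ?_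
  gcongr
  exact_mod_cast hB _ (Nat.le_add_left N r)

def dyadicToInterval (n : ℕ) : ℕ := intStart (2 ^ Nat.log 2 n) + (n - 2 ^ Nat.log 2 n)

theorem dyadicToInterval_of_mem_Ico {r n : ℕ} (hn : n ∈ Set.Ico (2 ^ r) (2 ^ (r + 1))) :
    dyadicToInterval n = intStart (2 ^ r) + (n - 2 ^ r) := by
  rw [dyadicToInterval, Nat.log_eq_of_pow_le_of_lt_pow hn.1 hn.2]

theorem dyadicToInterval_two_pow_add {r s : ℕ} (hs : s < 2 ^ r) :
    dyadicToInterval (2 ^ r + s) = intStart (2 ^ r) + s := by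
  rw [dyadicToInterval_of_mem_Ico ⟨Nat.le_add_right _ _, by rw [pow_succ]; omega⟩,
    Nat.add_sub_cancel_left]

theorem ncard_preimage_dyadicToInterval_inter_Ico_le (A : Set ℕ) (r : ℕ) :
    (dyadicToInterval ⁻¹' A ∩ Set.Ico (2 ^ r) (2 ^ (r + 1))).ncard
      ≤ (A ∩ interval (2 ^ r)).ncard := by
  refine Set.ncard_le_ncard_of_injOn dyadicToInterval (fun n hn ↦ ⟨hn.1, ?_⟩) ?_
    ((Set.finite_Ico _ _).inter_of_right A)
  · have := hn.2.2
    rw [dyadicToInterval_of_mem_Ico hn.2, interval, Set.mem_Ico, pow_succ] at *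
    omega
  · intro a ha b hb hab
    rw [dyadicToInterval_of_mem_Ico ha.2, dyadicToInterval_of_mem_Ico hb.2] at hab
    have := ha.2.1
    have := hb.2.1
    omega

/-- The map `h : ω → ω` sending `2^r + s ↦ ⟨2^r, s⟩` (the `s`-th element of the
interval `I_{2^r}`) for `s < 2^r` witnesses a Katětov reduction
`ED_fin ≤_K Sum_{1/n}`: for every `A ∈ ED_fin`, `Σ_{n ∈ h⁻¹[A]} 1/n < ∞`. -/
theorem stmt15 :
    ∃ h : ℕ → ℕ,
      (∀ r s : ℕ, s < 2 ^ r → h (2 ^ r + s) = intStart (2 ^ r) + s) ∧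
      ∀ A ∈ EDfin,
        Summable (Set.indicator (h ⁻¹' A) fun n : ℕ => (1 : ℝ) / n) := by
  refine ⟨dyadicToInterval, fun r s ↦ dyadicToInterval_two_pow_add, ?_⟩
  rintro A ⟨m, N, hA⟩
  refine summable_indicator_one_div_of_ncard_inter_Ico_two_pow_le (N := N) (m := m) fun r hr ↦ ?_
  exact (ncard_preimage_dyadicToInterval_inter_Ico_le A r).trans
    (hA _ (hr.trans r.lt_two_pow_self.le))
end
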